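/- arXiv:2411.06476 — 3 statements merged into one kernel-verified Lean document; each statement's English description precedes it below -/
import Mathlib

section
/- Under SGD with update x_{k+1} = x_k + α_k M (b_{i_k} − ⟨a_{i_k}, x_k⟩) a_{i_k}, where i_k are i.i.d. uniform on {1,...,M}, the expectation satisfies E[⟨x_{n+1} − x*, v_ℓ⟩ | x_0] = ( ∏_{k=0}^{n} (1 − α_k σ_ℓ²) ) ⟨x_0 − x*, v_ℓ⟩. -/
open Matrix Finset

/-!
Since `x*` minimizes `‖Ax − b‖²`, the residual `A x* − b` is orthogonal to the range of `A`.
Hence averaging the update over the index `i_k` replaces the stochastic gradient by the full one,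
and its component along the eigenvector `v` of `AᵀA` is multiplied by `1 − α_k σ²`. The iterate
`x_k` depends only on `i_0, …, i_{k−1}`, so the average over all index sequences can be taken
one step at a time, from the last index backwards.
-/

section LinearAlgebra

variable {m n : Type*} [Fintype m] [Fintype n]

theorem dotProduct_eq_zero_of_forall_le_add_smul {r w : m → ℝ}
    (h : ∀ t : ℝ, r ⬝ᵥ r ≤ (r + t • w) ⬝ᵥ (r + t • w)) : r ⬝ᵥ w = 0 := by
  -- a nonnegative quadratic in `t` vanishing at `0` has discriminant `4 (r ⬝ᵥ w)² ≤ 0`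
  have hquad : ∀ t : ℝ, 0 ≤ (w ⬝ᵥ w) * (t * t) + 2 * (r ⬝ᵥ w) * t + 0 := fun t => by
    have := h t
    simp only [add_dotProduct, dotProduct_add, smul_dotProduct, dotProduct_smul, smul_eq_mul,
      dotProduct_comm w r] at this
    linarith
  have := discrim_le_zero hquad
  rw [discrim] at this
  nlinarith [sq_nonneg (r ⬝ᵥ w)]

theorem residual_dotProduct_mulVec_eq_zero {A : Matrix m n ℝ} {b : m → ℝ} {xstar : n → ℝ}
    (hxstar : ∀ y : n → ℝ,
      (A *ᵥ xstar - b) ⬝ᵥ (A *ᵥ xstar - b) ≤ (A *ᵥ y - b) ⬝ᵥ (A *ᵥ y - b))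
    (w : n → ℝ) : (A *ᵥ xstar - b) ⬝ᵥ A *ᵥ w = 0 :=
  dotProduct_eq_zero_of_forall_le_add_smul fun t => by
    simpa only [mulVec_add, mulVec_smul, add_sub_right_comm] using hxstar (xstar + t • w)

theorem mulVec_dotProduct_mulVec_eq_of_eigen {A : Matrix m n ℝ} {μ : ℝ} {v : n → ℝ}
    (hv : (Aᵀ * A) *ᵥ v = μ • v) (u : n → ℝ) : A *ᵥ u ⬝ᵥ A *ᵥ v = μ * (u ⬝ᵥ v) := by
  rw [dotProduct_comm, dotProduct_mulVec, ← mulVec_transpose, mulVec_mulVec, hv, smul_dotProduct,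
    smul_eq_mul, dotProduct_comm]

theorem sum_dotProduct_add_smul_row {A : Matrix m n ℝ} {b : m → ℝ} {xstar v : n → ℝ} {μ : ℝ}
    (hv : (Aᵀ * A) *ᵥ v = μ • v) (hres : (A *ᵥ xstar - b) ⬝ᵥ A *ᵥ v = 0) (c : ℝ)
    (y : n → ℝ) :
    ∑ i, (y + (c * (b i - A i ⬝ᵥ y)) • A i - xstar) ⬝ᵥ v
      = (Fintype.card m - c * μ) * ((y - xstar) ⬝ᵥ v) := by
  have hmean : ∑ i, (b i - A i ⬝ᵥ y) * (A i ⬝ᵥ v) = -(μ * ((y - xstar) ⬝ᵥ v)) := by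
    have hsplit : b - A *ᵥ y = -(A *ᵥ (y - xstar)) - (A *ᵥ xstar - b) := by
      rw [mulVec_sub]; abel
    change (b - A *ᵥ y) ⬝ᵥ A *ᵥ v = _
    rw [hsplit, sub_dotProduct, neg_dotProduct, hres, mulVec_dotProduct_mulVec_eq_of_eigen hv,
      sub_zero]
  have hterm : ∀ i, (y + (c * (b i - A i ⬝ᵥ y)) • A i - xstar) ⬝ᵥ v
      = (y - xstar) ⬝ᵥ v + c * ((b i - A i ⬝ᵥ y) * (A i ⬝ᵥ v)) := fun i => by
    rw [add_sub_right_comm, add_dotProduct, smul_dotProduct, smul_eq_mul, mul_assoc]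
  simp only [hterm, sum_add_distrib, sum_const, card_univ, nsmul_eq_mul, ← mul_sum, hmean]
  ring

end LinearAlgebra

section Sequences

variable {α : Type*}

def padSeq {n : ℕ} (d : ℕ → α) (ω : Fin n → α) : ℕ → α :=
  fun j => if h : j < n then ω ⟨j, h⟩ else d j

@[simp]
theorem padSeq_fin_zero (d : ℕ → α) (ω : Fin 0 → α) : padSeq d ω = d :=
  funext fun j => dif_neg j.not_lt_zero

theorem padSeq_snoc_of_lt (d : ℕ → α) {n : ℕ} (ω : Fin n → α) (i : α) :
    ∀ j < n, padSeq d (Fin.snoc ω i : Fin (n + 1) → α) j = padSeq d ω j := by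
  intro j hj
  simp only [padSeq, dif_pos hj, dif_pos (hj.trans n.lt_succ_self)]
  exact Fin.snoc_castSucc (α := fun _ => α) (i := ⟨j, hj⟩) ..

@[simp]
theorem padSeq_snoc_self (d : ℕ → α) {n : ℕ} (ω : Fin n → α) (i : α) :
    padSeq d (Fin.snoc ω i : Fin (n + 1) → α) n = i := by
  simp [padSeq, Fin.snoc]

theorem apply_eq_of_forall_lt_eq {β : Type*} {x : (ℕ → α) → ℕ → β} (F : ℕ → β → α → β)
    (h0 : ∀ ω ω', x ω 0 = x ω' 0) (hstep : ∀ ω k, x ω (k + 1) = F k (x ω k) (ω k))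
    {ω ω' : ℕ → α} {k : ℕ} (h : ∀ j < k, ω j = ω' j) : x ω k = x ω' k := by
  induction k with
  | zero => exact h0 ω ω'
  | succ k ih =>
    rw [hstep, hstep, ih fun j hj => h j (hj.trans k.lt_succ_self), h k k.lt_succ_self]

theorem Fintype.sum_fin_succ_pi {R : Type*} [AddCommMonoid R] [Fintype α] {n : ℕ}
    (f : (Fin (n + 1) → α) → R) :
    ∑ ω, f ω = ∑ ω : Fin n → α, ∑ i, f (Fin.snoc ω i) := by
  rw [← Fintype.sum_equiv (Fin.snocEquiv fun _ => α) (fun p => f (Fin.snoc p.2 p.1)) f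
    fun _ => rfl, Fintype.sum_prod_type, Finset.sum_comm]

theorem sum_padSeq_eq_prod_mul {R : Type*} [CommSemiring R] [Fintype α] (e : (ℕ → α) → ℕ → R)
    (c : ℕ → R) (d : ℕ → α)
    (hstep : ∀ n (ω : Fin n → α), ∑ i, e (padSeq d (Fin.snoc ω i)) (n + 1) = c n * e (padSeq d ω) n)
    (n : ℕ) : ∑ ω : Fin n → α, e (padSeq d ω) n = (∏ k ∈ range n, c k) * e d 0 := by
  induction n with
  | zero => simp
  | succ n ih =>
    rw [Fintype.sum_fin_succ_pi, Finset.sum_congr rfl fun ω _ => hstep n ω, ← mul_sum, ih,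
      prod_range_succ]
    ring

end Sequences

/-- SGD on `F(x) = (1/2)‖Ax − b‖²` with update
`x_{k+1} = x_k + α_k M (b_{i_k} − ⟨a_{i_k}, x_k⟩) a_{i_k}`, with `i_0, …, i_n`
i.i.d. uniform on `{1,…,M}`: the expectation (average over all index sequences)
satisfies `E[⟨x_{n+1} − x*, v_ℓ⟩ | x_0] = (∏_{k=0}^n (1 − α_k σ_ℓ²)) ⟨x_0 − x*, v_ℓ⟩`. -/
theorem stmt_5 {M N : ℕ} (hM : 0 < M) (A : Matrix (Fin M) (Fin N) ℝ) (b : Fin M → ℝ)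
    (σℓ : ℝ) (v : Fin N → ℝ) (hv : (Aᵀ * A).mulVec v = σℓ ^ 2 • v)
    (xstar : Fin N → ℝ)
    (hxstar : ∀ y : Fin N → ℝ,
      (A.mulVec xstar - b) ⬝ᵥ (A.mulVec xstar - b) ≤ (A.mulVec y - b) ⬝ᵥ (A.mulVec y - b))
    (α : ℕ → ℝ) (x0 : Fin N → ℝ)
    (x : (ℕ → Fin M) → ℕ → (Fin N → ℝ))
    (hx0 : ∀ ω, x ω 0 = x0)
    (hupd : ∀ ω k, x ω (k + 1) =
      x ω k + (α k * M * (b (ω k) - A (ω k) ⬝ᵥ x ω k)) • A (ω k)) (n : ℕ) :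
    (1 / (M : ℝ) ^ (n + 1)) *
        ∑ ω : Fin (n + 1) → Fin M,
          ((x (fun j => if h : j < n + 1 then ω ⟨j, h⟩ else ω 0) (n + 1) - xstar) ⬝ᵥ v) =
      (∏ k ∈ Finset.range (n + 1), (1 - α k * σℓ ^ 2)) * ((x0 - xstar) ⬝ᵥ v) := by
  have hres := residual_dotProduct_mulVec_eq_zero hxstar v
  have hprefix {ω ω' : ℕ → Fin M} {k : ℕ} (h : ∀ j < k, ω j = ω' j) : x ω k = x ω' k :=
    apply_eq_of_forall_lt_eq (fun k y i => y + (α k * M * (b i - A i ⬝ᵥ y)) • A i)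
      (fun ω ω' => by rw [hx0, hx0]) hupd h
  let d : ℕ → Fin M := fun _ => ⟨0, hM⟩
  have hstep (k : ℕ) (ω : Fin k → Fin M) :
      ∑ i, (x (padSeq d (Fin.snoc ω i)) (k + 1) - xstar) ⬝ᵥ v
        = M * (1 - α k * σℓ ^ 2) * ((x (padSeq d ω) k - xstar) ⬝ᵥ v) := by
    have hsame (i : Fin M) : x (padSeq d (Fin.snoc ω i)) k = x (padSeq d ω) k :=
      hprefix (padSeq_snoc_of_lt d ω i)
    simp only [hupd, padSeq_snoc_self, hsame]
    rw [sum_dotProduct_add_smul_row hv hres, Fintype.card_fin]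
    ring
  have hpad (ω : Fin (n + 1) → Fin M) :
      x (fun j => if h : j < n + 1 then ω ⟨j, h⟩ else ω 0) (n + 1) = x (padSeq d ω) (n + 1) :=
    hprefix fun j hj => by simp [padSeq, hj]
  have hM0 : (M : ℝ) ≠ 0 := by positivity
  simp only [hpad, sum_padSeq_eq_prod_mul (fun ω k => (x ω k - xstar) ⬝ᵥ v) _ d hstep, hx0]
  rw [prod_mul_distrib, prod_const, card_range, mul_assoc, one_div,
    inv_mul_cancel_left₀ (pow_ne_zero _ hM0)]
end

section
/- For any SGD iterate x_k, E[⟨∇f_i(x_k), v_ℓ⟩² | x_k] ≤ M L̃ c(A) σ_max² ‖x_k − x*‖² + 2 M L̃ F*, where the expectation is over i uniform on {1,...,M}. -/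
open Matrix Finset

/-!
Write `r = A x - b`. By Cauchy–Schwarz each `⟨a_i, v⟩²` is at most `L̃`, so the expectation is at
most `M L̃ ‖r‖²`. Since `x*` minimises `‖A y - b‖²`, the residual `A x* - b` is orthogonal to the
range of `A`, whence `‖r‖² = ‖A (x - x*)‖² + 2 F*` (Pythagoras). Finally
`‖A (x - x*)‖² ≤ σ_max² ‖x - x*‖² ≤ c(A) σ_max² ‖x - x*‖²` because `c(A) ≥ 1`.
-/

section LeastSquares

variable {m n : Type*} [Fintype m] [Fintype n]

lemma dotProduct_self_nonneg (u : n → ℝ) : 0 ≤ u ⬝ᵥ u :=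
  Fintype.sum_nonneg fun i => mul_self_nonneg (u i)

lemma dotProduct_sq_le_dotProduct_self_mul (u v : n → ℝ) :
    (u ⬝ᵥ v) ^ 2 ≤ (u ⬝ᵥ u) * (v ⬝ᵥ v) := by
  simpa only [dotProduct, sq] using sum_mul_sq_le_sq_mul_sq univ u v

lemma smul_dotProduct_smul_self (c : ℝ) (u : n → ℝ) :
    (c • u) ⬝ᵥ (c • u) = c ^ 2 * (u ⬝ᵥ u) := by
  rw [smul_dotProduct, dotProduct_smul, smul_eq_mul, smul_eq_mul, ← mul_assoc, sq]

lemma sum_sq_mul_dotProduct_le (A : Matrix m n ℝ) (r : m → ℝ) (v : n → ℝ) {L : ℝ}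
    (hL : ∀ i, A i ⬝ᵥ A i ≤ L) :
    ∑ i, (r i * (A i ⬝ᵥ v)) ^ 2 ≤ L * (v ⬝ᵥ v) * (r ⬝ᵥ r) := by
  rw [show r ⬝ᵥ r = ∑ i, r i * r i from rfl, mul_sum]
  refine sum_le_sum fun i _ => ?_
  calc (r i * (A i ⬝ᵥ v)) ^ 2 = r i ^ 2 * (A i ⬝ᵥ v) ^ 2 := mul_pow ..
    _ ≤ r i ^ 2 * ((A i ⬝ᵥ A i) * (v ⬝ᵥ v)) := by
      gcongr; exact dotProduct_sq_le_dotProduct_self_mul _ _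
    _ ≤ r i ^ 2 * (L * (v ⬝ᵥ v)) := by
      gcongr
      · exact dotProduct_self_nonneg v
      · exact hL i
    _ = L * (v ⬝ᵥ v) * (r i * r i) := by ring

lemma mulVec_dotProduct_self_le {A : Matrix m n ℝ} {c : ℝ}
    (hc : ∀ y, y ⬝ᵥ y = 1 → A *ᵥ y ⬝ᵥ A *ᵥ y ≤ c) (y : n → ℝ) :
    A *ᵥ y ⬝ᵥ A *ᵥ y ≤ c * (y ⬝ᵥ y) := by
  obtain rfl | hy := eq_or_ne y 0
  · simp
  set s := y ⬝ᵥ y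
  have hs : 0 < s := (dotProduct_self_nonneg y).lt_of_ne' (dotProduct_self_eq_zero.not.mpr hy)
  have hs_inv : ((√s)⁻¹) ^ 2 = s⁻¹ := by rw [inv_pow, Real.sq_sqrt hs.le]
  have h := hc ((√s)⁻¹ • y) (by rw [smul_dotProduct_smul_self, hs_inv, inv_mul_cancel₀ hs.ne'])
  rwa [mulVec_smul, smul_dotProduct_smul_self, hs_inv, inv_mul_le_iff₀ hs, mul_comm] at h

variable {A : Matrix m n ℝ} {b : m → ℝ} {xstar : n → ℝ}

lemma mulVec_dotProduct_residual_eq_zero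
    (hmin : ∀ y, (A *ᵥ xstar - b) ⬝ᵥ (A *ᵥ xstar - b) ≤ (A *ᵥ y - b) ⬝ᵥ (A *ᵥ y - b))
    (d : n → ℝ) : A *ᵥ d ⬝ᵥ (A *ᵥ xstar - b) = 0 := by
  set r := A *ᵥ xstar - b
  set u := A *ᵥ d
  have hquad : ∀ t : ℝ, 0 ≤ (u ⬝ᵥ u) * (t * t) + 2 * (u ⬝ᵥ r) * t + 0 := fun t => by
    have h := hmin (xstar + t • d)
    have hline : A *ᵥ (xstar + t • d) - b = r + t • u := by
      rw [mulVec_add, mulVec_smul, add_sub_right_comm]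
    rw [hline] at h
    simp only [add_dotProduct, dotProduct_add, smul_dotProduct, dotProduct_smul, smul_eq_mul,
      dotProduct_comm r u] at h
    linarith
  have hdisc := discrim_le_zero hquad
  rw [discrim] at hdisc
  nlinarith [sq_nonneg (u ⬝ᵥ r)]

lemma residual_dotProduct_self_eq_of_isMin
    (hmin : ∀ y, (A *ᵥ xstar - b) ⬝ᵥ (A *ᵥ xstar - b) ≤ (A *ᵥ y - b) ⬝ᵥ (A *ᵥ y - b))
    (x : n → ℝ) :
    (A *ᵥ x - b) ⬝ᵥ (A *ᵥ x - b) =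
      A *ᵥ (x - xstar) ⬝ᵥ A *ᵥ (x - xstar) + (A *ᵥ xstar - b) ⬝ᵥ (A *ᵥ xstar - b) := by
  have horth := mulVec_dotProduct_residual_eq_zero hmin (x - xstar)
  have hsplit : A *ᵥ x - b = A *ᵥ (x - xstar) + (A *ᵥ xstar - b) := by
    rw [mulVec_sub]; abel
  rw [hsplit, add_dotProduct, dotProduct_add, dotProduct_add, dotProduct_comm (A *ᵥ xstar - b),
    horth]
  ring

end LeastSquares

theorem stmt_6_general {M N : ℕ} (A : Matrix (Fin M) (Fin N) ℝ) (b : Fin M → ℝ)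
    (σmax σmin : ℝ) (hσmin : 0 < σmin)
    (hσmax : IsGreatest {t : ℝ | ∃ y : Fin N → ℝ, y ⬝ᵥ y = 1 ∧
      (A.mulVec y) ⬝ᵥ (A.mulVec y) = t} (σmax ^ 2))
    (hσminIsLeast : IsLeast {t : ℝ | ∃ y : Fin N → ℝ, y ⬝ᵥ y = 1 ∧
      (A.mulVec y) ⬝ᵥ (A.mulVec y) = t} (σmin ^ 2))
    (Ltil : ℝ) (hLtil : IsGreatest {t : ℝ | ∃ i : Fin M, (A i) ⬝ᵥ (A i) = t} Ltil)
    (Fstar : ℝ)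
    (hFstar : IsLeast {t : ℝ | ∃ y : Fin N → ℝ,
      (1 / 2) * ((A.mulVec y - b) ⬝ᵥ (A.mulVec y - b)) = t} Fstar)
    (xstar : Fin N → ℝ)
    (hxstar : (1 / 2) * ((A.mulVec xstar - b) ⬝ᵥ (A.mulVec xstar - b)) = Fstar)
    (v : Fin N → ℝ) (hv : v ⬝ᵥ v = 1) (x : Fin N → ℝ) :
    (1 / (M : ℝ)) * ∑ i : Fin M, ((M : ℝ) * (A i ⬝ᵥ x - b i) * (A i ⬝ᵥ v)) ^ 2 ≤
      (M : ℝ) * Ltil * (σmax ^ 2 / σmin ^ 2) * σmax ^ 2 * ((x - xstar) ⬝ᵥ (x - xstar)) +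
        2 * (M : ℝ) * Ltil * Fstar := by
  obtain ⟨⟨i₀, hi₀⟩, hrow⟩ := hLtil
  have hMpos : (0 : ℝ) < M := by exact_mod_cast i₀.pos
  have hL0 : 0 ≤ Ltil := hi₀ ▸ dotProduct_self_nonneg (A i₀)
  have hmin : ∀ y, (A *ᵥ xstar - b) ⬝ᵥ (A *ᵥ xstar - b) ≤ (A *ᵥ y - b) ⬝ᵥ (A *ᵥ y - b) :=
    fun y => by linarith [hFstar.2 ⟨y, rfl⟩]
  have hratio : 1 ≤ σmax ^ 2 / σmin ^ 2 :=
    (one_le_div (by positivity)).mpr (hσmax.2 hσminIsLeast.1)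
  have hres : (A *ᵥ x - b) ⬝ᵥ (A *ᵥ x - b) ≤
      σmax ^ 2 / σmin ^ 2 * σmax ^ 2 * ((x - xstar) ⬝ᵥ (x - xstar)) + 2 * Fstar := by
    rw [residual_dotProduct_self_eq_of_isMin hmin x]
    have hop := mulVec_dotProduct_self_le (fun y hy => hσmax.2 ⟨y, hy, rfl⟩) (x - xstar)
    have hσ0 : 0 ≤ σmax ^ 2 * ((x - xstar) ⬝ᵥ (x - xstar)) :=
      (dotProduct_self_nonneg _).trans hop
    nlinarith
  calc (1 / (M : ℝ)) * ∑ i, ((M : ℝ) * (A i ⬝ᵥ x - b i) * (A i ⬝ᵥ v)) ^ 2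
      = M * ∑ i, ((A *ᵥ x - b) i * (A i ⬝ᵥ v)) ^ 2 := by
        rw [mul_sum, mul_sum]
        refine sum_congr rfl fun i _ => ?_
        simp only [Pi.sub_apply, mulVec]
        field_simp
    _ ≤ M * (Ltil * (v ⬝ᵥ v) * ((A *ᵥ x - b) ⬝ᵥ (A *ᵥ x - b))) := by
        gcongr; exact sum_sq_mul_dotProduct_le A _ v fun i => hrow ⟨i, rfl⟩
    _ ≤ M * (Ltil * (σmax ^ 2 / σmin ^ 2 * σmax ^ 2 * ((x - xstar) ⬝ᵥ (x - xstar)) +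
        2 * Fstar)) := by
        rw [hv, mul_one]; gcongr
    _ = _ := by ring

/-- For SGD on least squares with `f_i(x) = (M/2)(a_iᵀx − b_i)²` (so
`⟨∇f_i(x), v⟩ = M(a_iᵀx − b_i)⟨a_i, v⟩`), the expectation over `i` uniform on
`{1,…,M}` satisfies
`E[⟨∇f_i(x), v⟩²] ≤ M L̃ c(A) σ_max² ‖x − x*‖² + 2 M L̃ F*`. -/
theorem stmt_6 {M N : ℕ} (hM : 0 < M) (A : Matrix (Fin M) (Fin N) ℝ) (b : Fin M → ℝ)
    (σmax σmin : ℝ) (hσmin : 0 < σmin)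
    (hσmax : IsGreatest {t : ℝ | ∃ y : Fin N → ℝ, y ⬝ᵥ y = 1 ∧
      (A.mulVec y) ⬝ᵥ (A.mulVec y) = t} (σmax ^ 2))
    (hσminIsLeast : IsLeast {t : ℝ | ∃ y : Fin N → ℝ, y ⬝ᵥ y = 1 ∧
      (A.mulVec y) ⬝ᵥ (A.mulVec y) = t} (σmin ^ 2))
    (Ltil : ℝ) (hLtil : IsGreatest {t : ℝ | ∃ i : Fin M, (A i) ⬝ᵥ (A i) = t} Ltil)
    (Fstar : ℝ)
    (hFstar : IsLeast {t : ℝ | ∃ y : Fin N → ℝ,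
      (1 / 2) * ((A.mulVec y - b) ⬝ᵥ (A.mulVec y - b)) = t} Fstar)
    (xstar : Fin N → ℝ)
    (hxstar : (1 / 2) * ((A.mulVec xstar - b) ⬝ᵥ (A.mulVec xstar - b)) = Fstar)
    (v : Fin N → ℝ) (hv : v ⬝ᵥ v = 1) (x : Fin N → ℝ) :
    (1 / (M : ℝ)) * ∑ i : Fin M, ((M : ℝ) * (A i ⬝ᵥ x - b i) * (A i ⬝ᵥ v)) ^ 2 ≤
      (M : ℝ) * Ltil * (σmax ^ 2 / σmin ^ 2) * σmax ^ 2 * ((x - xstar) ⬝ᵥ (x - xstar)) +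
        2 * (M : ℝ) * Ltil * Fstar :=
  stmt_6_general A b σmax σmin hσmin hσmax hσminIsLeast Ltil hLtil Fstar hFstar xstar hxstar v hv x
end

section
/- If SGD is run with step size α_k = a/(b+k)^γ for 1/2 ≤ γ < 1 and a, b > 0 with aσ_ℓ² ≤ b^γ, then |E[⟨x_{n+1} − x*, v_ℓ⟩]| ≤ exp( (aσ_ℓ²/(1−γ)) (b^{1−γ} − (b+n)^{1−γ}) ) |⟨x_0 − x*, v_ℓ⟩|. -/
/-!
Since `x_k` depends only on `i_0, …, i_{k-1}`, averaging the update over `i_k` replaces the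
stochastic gradient by the full gradient `Aᵀ(A x_k - b) = AᵀA (x_k - x*)` (normal equations),
so the mean of `⟨x_k - x*, v⟩` is multiplied by exactly `1 - α_k σ²` at each step. Then
`∏ (1 - α_k σ²) ≤ exp (-σ² ∑ α_k)`, and `∑ α_k` is bounded below by `∫ a (c + t)^(-γ) dt`.
-/

open Matrix Finset Real

theorem Fintype.sum_sum_update {ι α R : Type*} [Fintype ι] [DecidableEq ι] [Fintype α]
    [AddCommMonoid R] (G : (ι → α) → R) (k : ι) :
    ∑ ω : ι → α, ∑ i, G (Function.update ω k i) = Fintype.card α • ∑ ω, G ω := by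
  let e := Equiv.funSplitAt k α
  have hupdate : ∀ j ρ i, Function.update (e.symm (j, ρ)) k i = e.symm (i, ρ) := by
    intro j ρ i
    ext l
    by_cases hl : l = k
    · subst hl; simp [e]
    · simp [e, hl]
  rw [← e.symm.sum_comp, ← e.symm.sum_comp, Fintype.sum_prod_type, Fintype.sum_prod_type]
  simp only [hupdate, Finset.sum_const, Finset.card_univ]
  rw [Finset.sum_comm]

theorem eq_of_forall_lt_eq_of_recursion {α β : Type*} {x : (ℕ → α) → ℕ → β} {x₀ : β}
    (f : ℕ → α → β → β) (hx₀ : ∀ ω, x ω 0 = x₀) (hsucc : ∀ ω k, x ω (k + 1) = f k (ω k) (x ω k))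
    {ω ω' : ℕ → α} {k : ℕ} (h : ∀ j < k, ω j = ω' j) : x ω k = x ω' k := by
  induction k with
  | zero => rw [hx₀, hx₀]
  | succ k ih =>
    rw [hsucc, hsucc, ih fun j hj => h j (by omega), h k (by omega)]

theorem Matrix.transpose_mulVec_residual_eq_zero {m n : Type*} [Fintype m] [Fintype n]
    (A : Matrix m n ℝ) (b : m → ℝ) (xstar : n → ℝ)
    (hmin : ∀ y, (A *ᵥ xstar - b) ⬝ᵥ (A *ᵥ xstar - b) ≤ (A *ᵥ y - b) ⬝ᵥ (A *ᵥ y - b)) :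
    Aᵀ *ᵥ (A *ᵥ xstar - b) = 0 := by
  set r := A *ᵥ xstar - b
  set g := Aᵀ *ᵥ r
  set w := A *ᵥ g
  have hrw : r ⬝ᵥ w = g ⬝ᵥ g := by rw [dotProduct_mulVec, ← mulVec_transpose]
  -- minimality along the line `xstar - t • g`: the discriminant `4 ‖g‖⁴` of this quadratic is `≤ 0`
  have hquad : ∀ t : ℝ, 0 ≤ (w ⬝ᵥ w) * (t * t) + (-2 * (g ⬝ᵥ g)) * t + 0 := by
    intro t
    have hres : A *ᵥ (xstar - t • g) - b = r - t • w := by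
      rw [mulVec_sub, mulVec_smul, sub_right_comm]
    have h := hmin (xstar - t • g)
    rw [hres] at h
    simp only [sub_dotProduct, dotProduct_sub, smul_dotProduct, dotProduct_smul, smul_eq_mul,
      dotProduct_comm w r, hrw] at h
    linarith
  have hdisc := discrim_le_zero hquad
  rw [discrim] at hdisc
  exact dotProduct_self_eq_zero.mp (by nlinarith)

theorem Matrix.sum_residual_mul_dotProduct {m n : Type*} [Fintype m] [Fintype n]
    {A : Matrix m n ℝ} {b : m → ℝ} {xstar v : n → ℝ} {s : ℝ}
    (hnormal : Aᵀ *ᵥ (A *ᵥ xstar - b) = 0) (hv : (Aᵀ * A) *ᵥ v = s • v) (u : n → ℝ) :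
    ∑ i, (b i - A i ⬝ᵥ u) * (A i ⬝ᵥ v) = -s * ((u - xstar) ⬝ᵥ v) := by
  have hAv : ∀ p, (A *ᵥ p) ⬝ᵥ (A *ᵥ v) = s * (p ⬝ᵥ v) := fun p => by
    rw [dotProduct_comm, dotProduct_mulVec, ← mulVec_transpose, mulVec_mulVec, hv,
      smul_dotProduct, smul_eq_mul, dotProduct_comm]
  have hres : (A *ᵥ xstar - b) ⬝ᵥ (A *ᵥ v) = 0 := by
    rw [dotProduct_mulVec, ← mulVec_transpose, hnormal, zero_dotProduct]
  have hsplit : b - A *ᵥ u = -(A *ᵥ (u - xstar)) - (A *ᵥ xstar - b) := by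
    rw [mulVec_sub]; abel
  calc ∑ i, (b i - A i ⬝ᵥ u) * (A i ⬝ᵥ v) = (b - A *ᵥ u) ⬝ᵥ (A *ᵥ v) := rfl
    _ = -s * ((u - xstar) ⬝ᵥ v) := by
      rw [hsplit, sub_dotProduct, neg_dotProduct, hAv, hres]; ring

theorem Matrix.sum_sgd_update_dotProduct {ι m n : Type*} [Fintype ι] [DecidableEq ι] [Fintype m]
    [Fintype n] {A : Matrix m n ℝ} {b : m → ℝ} {xstar v : n → ℝ} {s : ℝ}
    (hnormal : Aᵀ *ᵥ (A *ᵥ xstar - b) = 0) (hv : (Aᵀ * A) *ᵥ v = s • v) (α : ℝ) (k : ι)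
    (X : (ι → m) → n → ℝ) (hX : ∀ ω i, X (Function.update ω k i) = X ω) :
    ∑ ω, (X ω + (α * Fintype.card m * (b (ω k) - A (ω k) ⬝ᵥ X ω)) • A (ω k) - xstar) ⬝ᵥ v =
      (1 - α * s) * ∑ ω, (X ω - xstar) ⬝ᵥ v := by
  have hmean := Fintype.sum_sum_update (fun ω => (b (ω k) - A (ω k) ⬝ᵥ X ω) * (A (ω k) ⬝ᵥ v)) k
  simp only [Function.update_self, hX, sum_residual_mul_dotProduct hnormal hv, nsmul_eq_mul]
    at hmean
  calc ∑ ω, (X ω + (α * Fintype.card m * (b (ω k) - A (ω k) ⬝ᵥ X ω)) • A (ω k) - xstar) ⬝ᵥ v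
      = ∑ ω, (X ω - xstar) ⬝ᵥ v +
          α * (Fintype.card m * ∑ ω, (b (ω k) - A (ω k) ⬝ᵥ X ω) * (A (ω k) ⬝ᵥ v)) := by
        simp only [mul_sum, ← sum_add_distrib, sub_dotProduct, add_dotProduct, smul_dotProduct,
          smul_eq_mul]
        refine sum_congr rfl fun ω _ => by ring
    _ = (1 - α * s) * ∑ ω, (X ω - xstar) ⬝ᵥ v := by
        rw [← hmean, ← mul_sum]; ring

theorem Real.rpow_sub_rpow_div_le_sum_rpow_neg {c γ : ℝ} (hc : 0 < c) (hγ0 : 0 ≤ γ) (hγ1 : γ < 1)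
    (n : ℕ) : ((c + n) ^ (1 - γ) - c ^ (1 - γ)) / (1 - γ) ≤ ∑ k ∈ range n, (c + k) ^ (-γ) := by
  have hanti : AntitoneOn (fun x : ℝ => x ^ (-γ)) (Set.Icc c (c + n)) :=
    fun x hx y _ hxy => rpow_le_rpow_of_nonpos (hc.trans_le hx.1) hxy (by linarith)
  have h := hanti.integral_le_sum
  rwa [integral_rpow (Or.inl (by linarith)), neg_add_eq_sub] at h

theorem Real.prod_one_sub_le_exp_neg_sum {ι : Type*} {s : Finset ι} {t : ι → ℝ}
    (ht : ∀ i ∈ s, t i ≤ 1) : ∏ i ∈ s, (1 - t i) ≤ exp (-∑ i ∈ s, t i) := by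
  rw [← Finset.sum_neg_distrib, exp_sum]
  exact prod_le_prod (fun i hi => by linarith [ht i hi]) fun i _ => one_sub_le_exp_neg _

theorem Real.abs_prod_one_sub_div_rpow_le_exp {L c γ : ℝ} (hL : 0 ≤ L) (hc : 0 < c) (hγ0 : 0 ≤ γ)
    (hγ1 : γ < 1) (hLc : L ≤ c ^ γ) (n : ℕ) :
    |∏ k ∈ range (n + 1), (1 - L / (c + k) ^ γ)| ≤
      exp (L / (1 - γ) * (c ^ (1 - γ) - (c + n) ^ (1 - γ))) := by
  have hstep_le_one : ∀ k : ℕ, L / (c + k) ^ γ ≤ 1 := fun k =>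
    div_le_one_of_le₀ (hLc.trans (rpow_le_rpow hc.le (by simp) hγ0)) (by positivity)
  rw [abs_of_nonneg (prod_nonneg fun k _ => sub_nonneg.mpr (hstep_le_one k))]
  refine (prod_one_sub_le_exp_neg_sum fun k _ => hstep_le_one k).trans (exp_le_exp.mpr ?_)
  have hsum : L * (((c + n) ^ (1 - γ) - c ^ (1 - γ)) / (1 - γ)) ≤
      ∑ k ∈ range (n + 1), L / (c + k) ^ γ := by
    calc L * (((c + n) ^ (1 - γ) - c ^ (1 - γ)) / (1 - γ))
        ≤ L * ∑ k ∈ range n, (c + k) ^ (-γ) :=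
          mul_le_mul_of_nonneg_left (rpow_sub_rpow_div_le_sum_rpow_neg hc hγ0 hγ1 n) hL
      _ ≤ ∑ k ∈ range (n + 1), L / (c + k) ^ γ := by
          rw [mul_sum, sum_range_succ]
          refine le_add_of_le_of_nonneg (sum_le_sum fun k _ => ?_) (by positivity)
          rw [rpow_neg (by positivity), div_eq_mul_inv]
  have hγ : (1 - γ) ≠ 0 := by linarith
  calc -∑ k ∈ range (n + 1), L / (c + k) ^ γ
      ≤ -(L * (((c + n) ^ (1 - γ) - c ^ (1 - γ)) / (1 - γ))) := neg_le_neg hsum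
    _ = L / (1 - γ) * (c ^ (1 - γ) - (c + n) ^ (1 - γ)) := by field_simp; ring

/-- SGD with step size `α_k = a/(b+k)^γ`, `1/2 ≤ γ < 1`, `a, b > 0`, `a σ_ℓ² ≤ b^γ`,
satisfies
`|E[⟨x_{n+1} − x*, v_ℓ⟩]| ≤ exp((a σ_ℓ²/(1−γ))(b^{1−γ} − (b+n)^{1−γ})) |⟨x_0 − x*, v_ℓ⟩|`,
the expectation averaging over all i.i.d. uniform index sequences. -/
theorem stmt_15 {M N : ℕ} (hM : 0 < M) (A : Matrix (Fin M) (Fin N) ℝ) (b : Fin M → ℝ)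
    (σℓ : ℝ) (v : Fin N → ℝ) (hv : (Aᵀ * A).mulVec v = σℓ ^ 2 • v)
    (xstar : Fin N → ℝ)
    (hxstar : ∀ y : Fin N → ℝ,
      (A.mulVec xstar - b) ⬝ᵥ (A.mulVec xstar - b) ≤ (A.mulVec y - b) ⬝ᵥ (A.mulVec y - b))
    (a c γ : ℝ) (ha : 0 < a) (hc : 0 < c) (hγ1 : 1 / 2 ≤ γ) (hγ2 : γ < 1)
    (hstep : a * σℓ ^ 2 ≤ c ^ γ)
    (α : ℕ → ℝ) (hα : ∀ k, α k = a / (c + k) ^ γ)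
    (x0 : Fin N → ℝ) (x : (ℕ → Fin M) → ℕ → (Fin N → ℝ))
    (hx0 : ∀ ω, x ω 0 = x0)
    (hupd : ∀ ω k, x ω (k + 1) =
      x ω k + (α k * M * (b (ω k) - A (ω k) ⬝ᵥ x ω k)) • A (ω k)) (n : ℕ) :
    |(1 / (M : ℝ) ^ (n + 1)) *
        ∑ ω : Fin (n + 1) → Fin M,
          ((x (fun j => if h : j < n + 1 then ω ⟨j, h⟩ else ω 0) (n + 1) - xstar) ⬝ᵥ v)| ≤
      Real.exp ((a * σℓ ^ 2 / (1 - γ)) * (c ^ (1 - γ) - (c + (n : ℝ)) ^ (1 - γ))) *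
        |(x0 - xstar) ⬝ᵥ v| := by
  set ext : (Fin (n + 1) → Fin M) → ℕ → Fin M :=
    fun ω j => if h : j < n + 1 then ω ⟨j, h⟩ else ω 0 with hext
  set S : ℕ → ℝ := fun m => ∑ ω, (x (ext ω) m - xstar) ⬝ᵥ v with hS
  have hnormal := transpose_mulVec_residual_eq_zero A b xstar hxstar
  have hS_succ : ∀ k ≤ n, S (k + 1) = (1 - a * σℓ ^ 2 / (c + k) ^ γ) * S k := by
    intro k hk
    have hk' : k < n + 1 := by omega
    have hindep : ∀ ω i, x (ext (Function.update ω ⟨k, hk'⟩ i)) k = x (ext ω) k := fun ω i =>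
      eq_of_forall_lt_eq_of_recursion (fun k i y => y + (α k * M * (b i - A i ⬝ᵥ y)) • A i)
        hx0 hupd fun j hj => by
        simp only [hext, dif_pos (hj.trans hk'),
          Function.update_of_ne (Fin.ne_of_lt (show (⟨j, _⟩ : Fin (n + 1)) < ⟨k, hk'⟩ from hj))]
    have h := sum_sgd_update_dotProduct hnormal hv (α k) _ (fun ω => x (ext ω) k) hindep
    rw [Fintype.card_fin] at h
    simp only [hS, hupd, hext, dif_pos hk']
    rw [h, hα, div_mul_eq_mul_div]
  have hS_prod : ∀ m ≤ n + 1, S m = (∏ k ∈ range m, (1 - a * σℓ ^ 2 / (c + k) ^ γ)) * S 0 := by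
    intro m hm
    induction m with
    | zero => simp
    | succ m ih => rw [hS_succ m (by omega), ih (by omega), prod_range_succ]; ring
  have hS_zero : S 0 = M ^ (n + 1) * ((x0 - xstar) ⬝ᵥ v) := by
    simp only [hS, hx0, sum_const, card_univ, Fintype.card_fun, Fintype.card_fin, nsmul_eq_mul,
      Nat.cast_pow]
  have hbound := abs_prod_one_sub_div_rpow_le_exp (by positivity) hc (by linarith) hγ2 hstep n
  calc |1 / (M : ℝ) ^ (n + 1) * S (n + 1)|
      = |∏ k ∈ range (n + 1), (1 - a * σℓ ^ 2 / (c + k) ^ γ)| * |(x0 - xstar) ⬝ᵥ v| := by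
        rw [hS_prod _ le_rfl, hS_zero, ← abs_mul]
        field_simp
    _ ≤ _ := mul_le_mul_of_nonneg_right hbound (abs_nonneg _)
end
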